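/- Let (X, d) be a compact metric space and μ a finite Borel measure on X. Fix an integer k ≥ 1, points x_1, …, x_k ∈ X and weights t_1, …, t_k ∈ [0,1] with ∑_{i=1}^k t_i = 1, and suppose there is a constant c > 0 such that for each i one has μ(B(x_i, r))/r⁴ → c as r → 0⁺, where B(x,r) is the open metric ball. Fix δ > 0 small enough that 2δ is less than the diameter bound needed below, and let χ_δ : [0,∞) → ℝ be a smooth non-decreasing cut-off function with χ_δ(t) = t for t ∈ [0,δ], χ_δ(t) = 2δ for t ≥ 2δ, and χ_δ(t) ∈ [δ, 2δ] for t ∈ [δ, 2δ]. For λ > 0 define φ_λ : X → ℝ by φ_λ(y) = (1/4) · log ∑_{i=1}^k t_i · ( 2λ / (1 + λ² · χ_δ(d(y, x_i))²) )⁴. Then ∫_X e^{4 φ_λ} dμ is positive and finite for all large λ, and the Borel probability measures ν_λ with density e^{4 φ_λ} / ∫_X e^{4 φ_λ} dμ with respect to μ converge weakly, as λ → +∞, to the formal barycenter σ = ∑_{i=1}^k t_i δ_{x_i}, where δ_x denotes the Dirac probability measure at x. -/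

import Mathlib

open MeasureTheory Filter


noncomputable def Gb (lam s : ℝ) : ℝ := (2*lam/(1+lam^2*s^2))^4
noncomputable def qb (lam s : ℝ) : ℝ := 128*lam^6*s/(1+lam^2*s^2)^5
noncomputable def Fb (lam s : ℝ) : ℝ :=
  -(32:ℝ)/(1+lam^2*s^2)^2 + (128/3)/(1+lam^2*s^2)^3 - 16/(1+lam^2*s^2)^4

lemma den_pos (lam s : ℝ) : 0 < 1 + lam^2*s^2 := by positivity

lemma Gb_pos {lam : ℝ} (h : 0 < lam) (s : ℝ) : 0 < Gb lam s := by
  unfold Gb; positivity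

lemma Gb_nonneg (lam s : ℝ) : 0 ≤ Gb lam s := by
  unfold Gb; positivity

lemma qb_nonneg {lam s : ℝ} (hs : 0 ≤ s) : 0 ≤ qb lam s := by
  unfold qb; positivity

lemma Gb_anti {lam : ℝ} (h : 0 < lam) {s₁ s₂ : ℝ} (h1 : 0 ≤ s₁) (h12 : s₁ ≤ s₂) :
    Gb lam s₂ ≤ Gb lam s₁ := by
  unfold Gb
  have h2 : 0 ≤ s₂ := h1.trans h12
  have hsq : s₁^2 ≤ s₂^2 := pow_le_pow_left₀ h1 h12 2
  apply pow_le_pow_left₀ (by positivity)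
  apply div_le_div_of_nonneg_left (by positivity) (den_pos lam s₁)
  nlinarith [sq_nonneg lam]

lemma continuous_Gb (lam : ℝ) : Continuous (Gb lam) := by
  unfold Gb; fun_prop (disch := intro s; nlinarith [den_pos lam s])

lemma continuous_qb (lam : ℝ) : Continuous (qb lam) := by
  unfold qb; fun_prop (disch := intro s; positivity)

lemma hasDerivAt_negGb (lam s : ℝ) : HasDerivAt (fun u => -(Gb lam u)) (qb lam s) s := by
  have hu : HasDerivAt (fun u : ℝ => 1 + lam^2*u^2) (lam^2*(2*s)) s := by
    simpa using ((hasDerivAt_pow 2 s).const_mul (lam^2)).const_add 1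
  have h0 : (1 + lam^2*s^2) ≠ 0 := (den_pos lam s).ne'
  have h1 : HasDerivAt (fun u : ℝ => 2*lam/(1+lam^2*u^2))
      ((0*(1+lam^2*s^2) - (2*lam)*(lam^2*(2*s)))/(1+lam^2*s^2)^2) s :=
    (hasDerivAt_const s (2*lam)).div hu h0
  have h2 := (h1.pow 4).neg
  refine h2.congr_deriv ?_
  unfold qb; norm_num
  field_simp
  ring

lemma hasDerivAt_Fb (lam s : ℝ) : HasDerivAt (Fb lam) (qb lam s * s^4) s := by
  have hu : HasDerivAt (fun u : ℝ => 1 + lam^2*u^2) (lam^2*(2*s)) s := by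
    simpa using ((hasDerivAt_pow 2 s).const_mul (lam^2)).const_add 1
  have h0 : (1 + lam^2*s^2) ≠ 0 := (den_pos lam s).ne'
  have t2 : HasDerivAt (fun u : ℝ => -(32:ℝ)/(1+lam^2*u^2)^2)
      ((0*(1+lam^2*s^2)^2 - (-(32:ℝ))*(2*(1+lam^2*s^2)^1*(lam^2*(2*s))))/((1+lam^2*s^2)^2)^2) s :=
    (hasDerivAt_const s (-(32:ℝ))).div (hu.pow 2) (by positivity)
  have t3 : HasDerivAt (fun u : ℝ => (128/3:ℝ)/(1+lam^2*u^2)^3)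
      ((0*(1+lam^2*s^2)^3 - (128/3:ℝ)*(3*(1+lam^2*s^2)^2*(lam^2*(2*s))))/((1+lam^2*s^2)^3)^2) s :=
    (hasDerivAt_const s ((128:ℝ)/3)).div (hu.pow 3) (by positivity)
  have t4 : HasDerivAt (fun u : ℝ => (16:ℝ)/(1+lam^2*u^2)^4)
      ((0*(1+lam^2*s^2)^4 - (16:ℝ)*(4*(1+lam^2*s^2)^3*(lam^2*(2*s))))/((1+lam^2*s^2)^4)^2) s :=
    (hasDerivAt_const s (16:ℝ)).div (hu.pow 4) (by positivity)
  have := (t2.add t3).sub t4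
  refine this.congr_deriv ?_
  unfold qb
  field_simp
  ring

lemma ftc_qb {lam a b : ℝ} (hab : a ≤ b) :
    ∫ s in a..b, qb lam s = Gb lam a - Gb lam b := by
  have := intervalIntegral.integral_eq_sub_of_hasDerivAt
    (fun s _ => hasDerivAt_negGb lam s)
    ((continuous_qb lam).intervalIntegrable a b)
  rw [this]; ring

lemma ftc_J (lam r : ℝ) :
    ∫ s in (0:ℝ)..r, qb lam s * s^4 = Fb lam r + 16/3 := by
  have := intervalIntegral.integral_eq_sub_of_hasDerivAt
    (fun s _ => hasDerivAt_Fb lam s)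
    (((continuous_qb lam).mul (continuous_pow 4)).intervalIntegrable 0 r)
  rw [this]
  have : Fb lam 0 = -(16/3) := by unfold Fb; norm_num
  rw [this]; ring

lemma qb_le {lam s r : ℝ} (hs : 0 ≤ s) (hsr : s ≤ r) : qb lam s ≤ 128*lam^6*r := by
  unfold qb
  have h1 : (1:ℝ) ≤ (1+lam^2*s^2)^5 := one_le_pow₀ (by nlinarith [sq_nonneg (lam*s)])
  calc 128*lam^6*s/(1+lam^2*s^2)^5 ≤ 128*lam^6*s/1 := by
        apply div_le_div_of_nonneg_left (by positivity) one_pos h1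
      _ = 128*lam^6*s := by ring
      _ ≤ 128*lam^6*r := by nlinarith [sq_nonneg (lam^3)]

lemma Gb_le {lam r : ℝ} (hl : 0 < lam) (hr : 0 < r) : Gb lam r ≤ 16/(lam^4*r^8) := by
  unfold Gb
  have h1 : 2*lam/(1+lam^2*r^2) ≤ 2*lam/(lam^2*r^2) :=
    div_le_div_of_nonneg_left (by positivity) (by positivity) (by nlinarith)
  calc (2*lam/(1+lam^2*r^2))^4 ≤ (2*lam/(lam^2*r^2))^4 := pow_le_pow_left₀ (by positivity) h1 4
    _ = 16/(lam^4*r^8) := by field_simp; ring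

lemma tendsto_const_Gb {C r : ℝ} (hC : 0 ≤ C) (hr : 0 < r) :
    Tendsto (fun lam => C * Gb lam r) atTop (nhds 0) := by
  have h1 : Tendsto (fun lam : ℝ => (lam^4)⁻¹) atTop (nhds 0) :=
    tendsto_inv_atTop_zero.comp (tendsto_pow_atTop (n := 4) (by norm_num))
  have h0 : Tendsto (fun lam : ℝ => C*16/r^8 * (lam^4)⁻¹) atTop (nhds 0) := by
    have := h1.const_mul (C*16/r^8)
    simpa using this
  apply squeeze_zero' ?_ ?_ h0
  · filter_upwards [eventually_gt_atTop 0] with lam hlam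
    exact mul_nonneg hC (Gb_nonneg lam r)
  · filter_upwards [eventually_gt_atTop 0] with lam hlam
    calc C * Gb lam r ≤ C * (16/(lam^4*r^8)) := mul_le_mul_of_nonneg_left (Gb_le hlam hr) hC
      _ = C*16/r^8 * (lam^4)⁻¹ := by
          ring

lemma tendsto_Fb {r : ℝ} (hr : 0 < r) :
    Tendsto (fun lam => Fb lam r) atTop (nhds 0) := by
  have hu : Tendsto (fun lam : ℝ => 1+lam^2*r^2) atTop atTop := by
    apply tendsto_atTop_add_const_left
    exact (tendsto_pow_atTop (n := 2) (by norm_num)).atTop_mul_const (by positivity)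
  have key : ∀ (C : ℝ) (n : ℕ), n ≠ 0 →
      Tendsto (fun lam : ℝ => C/(1+lam^2*r^2)^n) atTop (nhds 0) :=
    fun C n hn => tendsto_const_nhds.div_atTop ((tendsto_pow_atTop hn).comp hu)
  have := ((key (-32) 2 (by norm_num)).add (key (128/3) 3 (by norm_num))).sub
    (key 16 4 (by norm_num))
  rw [show (0:ℝ) = 0 + 0 - 0 by ring]; exact this

lemma cont_integrable {X : Type*} [MetricSpace X] [CompactSpace X] [MeasurableSpace X]
    [BorelSpace X] (μ : Measure X) [IsFiniteMeasure μ] {f : X → ℝ} (hf : Continuous f) :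
    Integrable f μ := by
  rw [← integrableOn_univ]
  exact hf.continuousOn.integrableOn_compact isCompact_univ

set_option maxHeartbeats 2000000 in
lemma concA {X : Type*} [MetricSpace X] [CompactSpace X] [MeasurableSpace X] [BorelSpace X]
    (μ : Measure X) [IsFiniteMeasure μ] (p : X) (c : ℝ) (hc : 0 < c)
    (hμb : Tendsto (fun r : ℝ => (μ (Metric.ball p r)).toReal / r ^ 4)
      (nhdsWithin 0 (Set.Ioi 0)) (nhds c))
    (δ : ℝ) (hδ : 0 < δ) (χ : ℝ → ℝ) (hχc : ContinuousOn χ (Set.Ici 0))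
    (hχmono : MonotoneOn χ (Set.Ici 0)) (hχ1 : ∀ s ∈ Set.Icc (0:ℝ) δ, χ s = s) :
    Tendsto (fun lam => ∫ y, Gb lam (χ (dist y p)) ∂μ) atTop (nhds (16*c/3)) := by
  set MX := (μ Set.univ).toReal with hMXdef
  have hMX0 : 0 ≤ MX := ENNReal.toReal_nonneg
  set m : ℝ → ℝ := fun s => (μ (Metric.ball p s)).toReal with hmdef
  have hmmono : Monotone m := fun a b hab =>
    ENNReal.toReal_mono (measure_ne_top μ _) (measure_mono (Metric.ball_subset_ball hab))
  have hmmeas : Measurable m := hmmono.measurable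
  have hmnn : ∀ s, 0 ≤ m s := fun s => ENNReal.toReal_nonneg
  have hmMX : ∀ s, m s ≤ MX := fun s =>
    ENNReal.toReal_mono (measure_ne_top μ _) (measure_mono (Set.subset_univ _))
  have hχcont : Continuous (fun y => χ (dist y p)) :=
    hχc.comp_continuous (continuous_id.dist continuous_const) (fun y => dist_nonneg)
  have hint : ∀ lam : ℝ, Integrable (fun y => Gb lam (χ (dist y p))) μ :=
    fun lam => cont_integrable μ ((continuous_Gb lam).comp hχcont)
  rw [Metric.tendsto_nhds]
  intro ε hε
  set ε' : ℝ := ε/48 with hε'def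
  have hε'0 : 0 < ε' := by positivity
  set ε₂ : ℝ := min (ε/(8*(c+1))) (1/3) with hε₂def
  have hε₂0 : 0 < ε₂ := lt_min (by positivity) (by norm_num)
  -- choose r₀
  have h1 : ∀ᶠ s in nhdsWithin 0 (Set.Ioi 0), dist (m s / s^4) c < ε' :=
    (Metric.tendsto_nhds.mp hμb) ε' hε'0
  rw [eventually_nhdsWithin_iff, Metric.eventually_nhds_iff] at h1
  obtain ⟨η, hη, hη'⟩ := h1
  set r₀ : ℝ := min (η/2) δ with hr₀def
  have hr₀ : 0 < r₀ := lt_min (by positivity) hδ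
  have hr₀δ : r₀ ≤ δ := min_le_right _ _
  have hbound : ∀ s, 0 < s → s ≤ r₀ → |m s / s^4 - c| < ε' := by
    intro s hs hsr
    have hd : dist s 0 < η := by
      rw [Real.dist_eq, sub_zero, abs_of_pos hs]
      calc s ≤ r₀ := hsr
        _ ≤ η/2 := min_le_left _ _
        _ < η := by linarith
    have := hη' hd (Set.mem_Ioi.mpr hs)
    rwa [Real.dist_eq] at this
  have hup : ∀ s ∈ Set.Ioc (0:ℝ) r₀, m s ≤ (c+ε')*s^4 := by
    intro s hs
    have h4 : (0:ℝ) < s^4 := pow_pos hs.1 4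
    have h5 := (abs_lt.mp (hbound s hs.1 hs.2)).2
    have h6 : m s / s^4 ≤ c + ε' := by linarith
    calc m s = (m s/s^4)*s^4 := by rw [div_mul_cancel₀ _ h4.ne']
      _ ≤ (c+ε')*s^4 := mul_le_mul_of_nonneg_right h6 h4.le
  have hlo : ∀ s ∈ Set.Ioc (0:ℝ) r₀, (c-ε')*s^4 ≤ m s := by
    intro s hs
    have h4 : (0:ℝ) < s^4 := pow_pos hs.1 4
    have h5 := (abs_lt.mp (hbound s hs.1 hs.2)).1
    have h6 : c - ε' ≤ m s / s^4 := by linarith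
    calc (c-ε')*s^4 ≤ (m s/s^4)*s^4 := mul_le_mul_of_nonneg_right h6 h4.le
      _ = m s := by rw [div_mul_cancel₀ _ h4.ne']
  haveI hfinIoc : IsFiniteMeasure (volume.restrict (Set.Ioc (0:ℝ) r₀)) := by
    constructor
    rw [Measure.restrict_apply_univ, Real.volume_Ioc]
    exact ENNReal.ofReal_lt_top
  have hcont_int : ∀ g : ℝ → ℝ, Continuous g → IntegrableOn g (Set.Ioc (0:ℝ) r₀) volume :=
    fun g hg => (intervalIntegrable_iff_integrableOn_Ioc_of_le hr₀.le).mp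
      (hg.intervalIntegrable 0 r₀)
  -- tail bounds
  have hT : ∀ lam : ℝ, 0 < lam →
      0 ≤ (∫ y in (Metric.ball p r₀)ᶜ, Gb lam (χ (dist y p)) ∂μ) ∧
      (∫ y in (Metric.ball p r₀)ᶜ, Gb lam (χ (dist y p)) ∂μ) ≤ MX * Gb lam r₀ := by
    intro lam hlam
    constructor
    · exact setIntegral_nonneg measurableSet_ball.compl (fun y _ => Gb_nonneg _ _)
    · calc (∫ y in (Metric.ball p r₀)ᶜ, Gb lam (χ (dist y p)) ∂μ)
          ≤ ∫ _y in (Metric.ball p r₀)ᶜ, Gb lam r₀ ∂μ := by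
            apply setIntegral_mono_on ((hint lam).integrableOn)
              ((integrableOn_const_iff).mpr (Or.inr (measure_lt_top μ _))) measurableSet_ball.compl
            intro y hy
            have hyd : r₀ ≤ dist y p := by
              simpa [Metric.mem_ball, not_lt] using hy
            have hcd : r₀ ≤ χ (dist y p) := by
              calc r₀ = χ r₀ := (hχ1 r₀ ⟨hr₀.le, hr₀δ⟩).symm
                _ ≤ χ (dist y p) := hχmono (Set.mem_Ici.mpr hr₀.le)
                    (Set.mem_Ici.mpr dist_nonneg) hyd
            exact Gb_anti hlam hr₀.le hcd
        _ = (μ ((Metric.ball p r₀)ᶜ)).toReal • Gb lam r₀ := setIntegral_const _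
        _ ≤ MX * Gb lam r₀ := by
            rw [smul_eq_mul]
            exact mul_le_mul_of_nonneg_right
              (ENNReal.toReal_mono (measure_ne_top μ _) (measure_mono (Set.subset_univ _)))
              (Gb_nonneg _ _)
  -- middle term bounds
  have hqm_int : ∀ lam : ℝ, IntegrableOn (fun s => qb lam s * m s) (Set.Ioc (0:ℝ) r₀) volume := by
    intro lam
    apply Integrable.mono' (integrable_const (128*lam^6*r₀*MX))
      (((continuous_qb lam).measurable.mul hmmeas).aestronglyMeasurable)
    rw [ae_restrict_iff' measurableSet_Ioc]
    apply ae_of_all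
    intro s hs
    simp only [Pi.mul_apply]
    rw [Real.norm_eq_abs, abs_of_nonneg (mul_nonneg (qb_nonneg hs.1.le) (hmnn s))]
    exact mul_le_mul (qb_le hs.1.le hs.2) (hmMX s) (hmnn s) (by positivity)
  have hJint : ∀ lam a : ℝ, (∫ s in Set.Ioc (0:ℝ) r₀, a*(qb lam s * s^4)) = a*(Fb lam r₀+16/3) := by
    intro lam a
    rw [← intervalIntegral.integral_of_le hr₀.le, intervalIntegral.integral_const_mul, ftc_J]
  have hK : ∀ lam : ℝ, 0 < lam →
      (c-ε')*(Fb lam r₀+16/3) ≤ (∫ s in Set.Ioc (0:ℝ) r₀, qb lam s * m s) ∧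
      (∫ s in Set.Ioc (0:ℝ) r₀, qb lam s * m s) ≤ (c+ε')*(Fb lam r₀+16/3) := by
    intro lam _hlam
    constructor
    · rw [← hJint lam (c-ε')]
      apply setIntegral_mono_on
        (hcont_int _ (continuous_const.mul ((continuous_qb lam).mul (continuous_pow 4))))
        (hqm_int lam) measurableSet_Ioc
      intro s hs
      have h7 : (c-ε')*(qb lam s * s^4) = qb lam s * ((c-ε')*s^4) := by ring
      simp only [Pi.mul_apply]
      rw [h7]
      exact mul_le_mul_of_nonneg_left (hlo s hs) (qb_nonneg hs.1.le)
    · rw [← hJint lam (c+ε')]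
      apply setIntegral_mono_on (hqm_int lam)
        (hcont_int _ (continuous_const.mul ((continuous_qb lam).mul (continuous_pow 4))))
        measurableSet_Ioc
      intro s hs
      have h7 : (c+ε')*(qb lam s * s^4) = qb lam s * ((c+ε')*s^4) := by ring
      simp only [Pi.mul_apply]
      rw [h7]
      exact mul_le_mul_of_nonneg_left (hup s hs) (qb_nonneg hs.1.le)
  -- decomposition
  have hdecomp : ∀ lam : ℝ, 0 < lam →
      (∫ y, Gb lam (χ (dist y p)) ∂μ) =
        Gb lam r₀ * m r₀ + (∫ s in Set.Ioc (0:ℝ) r₀, qb lam s * m s) +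
          (∫ y in (Metric.ball p r₀)ᶜ, Gb lam (χ (dist y p)) ∂μ) := by
    intro lam hlam
    have hsplit := integral_add_compl (measurableSet_ball (x := p) (ε := r₀)) (hint lam)
    have hkey : ∀ y ∈ Metric.ball p r₀, Gb lam (χ (dist y p)) =
        Gb lam r₀ + ∫ s in Set.Ioc (0:ℝ) r₀, (if dist y p < s then qb lam s else 0) := by
      intro y hy
      have hd : dist y p < r₀ := Metric.mem_ball.mp hy
      have hd0 : 0 ≤ dist y p := dist_nonneg
      have hi1 : (fun s => if dist y p < s then qb lam s else 0) =
          Set.indicator (Set.Ioi (dist y p)) (qb lam) := by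
        funext s; simp [Set.indicator_apply, Set.mem_Ioi]
      rw [hχ1 (dist y p) ⟨hd0, hd.le.trans hr₀δ⟩, hi1,
        setIntegral_indicator measurableSet_Ioi]
      have hi2 : Set.Ioc (0:ℝ) r₀ ∩ Set.Ioi (dist y p) = Set.Ioc (dist y p) r₀ := by
        ext s
        simp only [Set.mem_inter_iff, Set.mem_Ioc, Set.mem_Ioi]
        constructor
        · rintro ⟨⟨_, h2⟩, h3⟩; exact ⟨h3, h2⟩
        · rintro ⟨h3, h2⟩; exact ⟨⟨lt_of_le_of_lt hd0 h3, h2⟩, h3⟩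
      rw [hi2, ← intervalIntegral.integral_of_le hd.le, ftc_qb hd.le]
      ring
    have hInner : IntegrableOn
        (fun y => ∫ s in Set.Ioc (0:ℝ) r₀, (if dist y p < s then qb lam s else 0))
        (Metric.ball p r₀) μ := by
      apply IntegrableOn.congr_fun
        (f := fun y => Gb lam (dist y p) - Gb lam r₀)
        ((cont_integrable μ (((continuous_Gb lam).comp
          (continuous_id.dist continuous_const)).sub continuous_const)).integrableOn)
        ?_ measurableSet_ball
      intro y hy
      have := hkey y hy
      rw [hχ1 (dist y p) ⟨dist_nonneg, (Metric.mem_ball.mp hy).le.trans hr₀δ⟩] at this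
      simp only []
      linarith [this]
    have hIball : (∫ y in Metric.ball p r₀, Gb lam (χ (dist y p)) ∂μ) =
        Gb lam r₀ * m r₀ + ∫ s in Set.Ioc (0:ℝ) r₀, qb lam s * m s := by
      rw [setIntegral_congr_fun measurableSet_ball (fun y hy => hkey y hy)]
      rw [integral_add (integrable_const _) hInner]
      congr 1
      · rw [setIntegral_const, smul_eq_mul, mul_comm]; rfl
      · -- Fubini swap
        have hA : MeasurableSet {z : X × ℝ | dist z.1 p < z.2} :=
          (isOpen_lt (continuous_fst.dist continuous_const) continuous_snd).measurableSet
        have hmeas : AEStronglyMeasurable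
            (Function.uncurry (fun y s => if dist y p < s then qb lam s else (0:ℝ)))
            ((μ.restrict (Metric.ball p r₀)).prod (volume.restrict (Set.Ioc (0:ℝ) r₀))) := by
          have huc : (Function.uncurry (fun y s => if dist y p < s then qb lam s else (0:ℝ)))
              = fun z : X × ℝ =>
                Set.indicator {z : X × ℝ | dist z.1 p < z.2} (fun z => qb lam z.2) z := by
            funext z
            simp [Function.uncurry, Set.indicator_apply, Set.mem_setOf_eq]
          rw [huc]
          exact (((continuous_qb lam).comp continuous_snd).measurable.indicator hA).aestronglyMeasurable
        have hI2 : Integrable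
            (Function.uncurry (fun y s => if dist y p < s then qb lam s else (0:ℝ)))
            ((μ.restrict (Metric.ball p r₀)).prod (volume.restrict (Set.Ioc (0:ℝ) r₀))) := by
          apply Integrable.mono' (integrable_const (128*lam^6*r₀)) hmeas
          rw [Measure.prod_restrict, ae_restrict_iff' (measurableSet_ball.prod measurableSet_Ioc)]
          apply ae_of_all
          rintro ⟨y, s⟩ hz
          obtain ⟨-, hs⟩ := hz
          simp only [Function.uncurry]
          split_ifs with h
          · rw [Real.norm_eq_abs, abs_of_nonneg (qb_nonneg hs.1.le)]
            exact qb_le hs.1.le hs.2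
          · simp only [norm_zero]
            positivity
        rw [integral_integral_swap hI2]
        apply setIntegral_congr_fun measurableSet_Ioc
        intro s hs
        show (∫ y in Metric.ball p r₀, (if dist y p < s then qb lam s else (0:ℝ)) ∂μ)
          = qb lam s * m s
        have hstep : (∫ y in Metric.ball p r₀, (if dist y p < s then qb lam s else (0:ℝ)) ∂μ)
            = ∫ y in Metric.ball p r₀,
                Set.indicator (Metric.ball p s) (fun _ => qb lam s) y ∂μ :=
          setIntegral_congr_fun measurableSet_ball (fun y _ => by
            by_cases h : dist y p < s <;>
              simp [Set.indicator_apply, Metric.mem_ball, h])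
        rw [hstep, setIntegral_indicator measurableSet_ball,
          Set.inter_eq_self_of_subset_right (Metric.ball_subset_ball hs.2),
          setIntegral_const, smul_eq_mul, mul_comm]; rfl
    rw [← hsplit, hIball]
  -- eventual bounds and conclusion
  have hE1 : ∀ᶠ lam in atTop, MX * Gb lam r₀ < ε/8 :=
    (tendsto_const_Gb hMX0 hr₀).eventually_lt_const (by positivity)
  have hE2 : ∀ᶠ lam in atTop, |Fb lam r₀| < ε₂ := by
    have := Metric.tendsto_nhds.mp (tendsto_Fb hr₀) ε₂ hε₂0
    simpa [Real.dist_eq] using this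
  filter_upwards [eventually_gt_atTop 0, hE1, hE2] with lam hlam hb1 hb2
  rw [Real.dist_eq, hdecomp lam hlam]
  obtain ⟨hK1, hK2⟩ := hK lam hlam
  obtain ⟨hT1, hT2⟩ := hT lam hlam
  have hGm1 : 0 ≤ Gb lam r₀ * m r₀ := mul_nonneg (Gb_nonneg _ _) (hmnn _)
  have hGm2 : Gb lam r₀ * m r₀ ≤ MX * Gb lam r₀ := by
    rw [mul_comm]
    exact mul_le_mul_of_nonneg_right (hmMX r₀) (Gb_nonneg _ _)
  have habs := abs_lt.mp hb2
  have hm3 : ε₂ ≤ 1/3 := min_le_right _ _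
  have hJ1 : 0 ≤ Fb lam r₀ + 16/3 := by linarith
  have hJ2 : Fb lam r₀ + 16/3 ≤ 6 := by linarith
  have hcε₂ : c*ε₂ ≤ ε/8 := by
    have h3 : ε₂ ≤ ε/(8*(c+1)) := min_le_left _ _
    have h4 : c*ε₂ ≤ c*(ε/(8*(c+1))) := mul_le_mul_of_nonneg_left h3 hc.le
    have h5 : c*(ε/(8*(c+1))) ≤ ε/8 := by
      rw [mul_comm, div_mul_eq_mul_div, div_le_div_iff₀ (by positivity) (by norm_num)]
      nlinarith
    linarith
  have e1 : c*(Fb lam r₀) ≤ c*ε₂ := mul_le_mul_of_nonneg_left habs.2.le hc.le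
  have e2 : c*(-ε₂) ≤ c*(Fb lam r₀) := mul_le_mul_of_nonneg_left habs.1.le hc.le
  have e3 : ε'*(Fb lam r₀ + 16/3) ≤ ε/8 := by
    have := mul_le_mul_of_nonneg_left hJ2 hε'0.le
    calc ε'*(Fb lam r₀ + 16/3) ≤ ε'*6 := this
      _ = ε/8 := by rw [hε'def]; ring
  have e4 : 0 ≤ ε'*(Fb lam r₀ + 16/3) := mul_nonneg hε'0.le hJ1
  have expand1 : (c+ε')*(Fb lam r₀+16/3) =
      c*(Fb lam r₀) + 16*c/3 + ε'*(Fb lam r₀+16/3) := by ring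
  have expand2 : (c-ε')*(Fb lam r₀+16/3) =
      c*(Fb lam r₀) + 16*c/3 - ε'*(Fb lam r₀+16/3) := by ring
  rw [abs_lt]
  constructor <;> nlinarith

set_option maxHeartbeats 2000000 in
lemma concB {X : Type*} [MetricSpace X] [CompactSpace X] [MeasurableSpace X] [BorelSpace X]
    (μ : Measure X) [IsFiniteMeasure μ] (p : X) (L : ℝ) {f : X → ℝ} (hf : Continuous f)
    (δ : ℝ) (hδ : 0 < δ) (χ : ℝ → ℝ) (hχc : ContinuousOn χ (Set.Ici 0))
    (hχmono : MonotoneOn χ (Set.Ici 0)) (hχ1 : ∀ s ∈ Set.Icc (0:ℝ) δ, χ s = s)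
    (hg : Tendsto (fun lam => ∫ y, Gb lam (χ (dist y p)) ∂μ) atTop (nhds L)) :
    Tendsto (fun lam => ∫ y, f y * Gb lam (χ (dist y p)) ∂μ) atTop (nhds (f p * L)) := by
  set MX := (μ Set.univ).toReal with hMXdef
  have hMX0 : 0 ≤ MX := ENNReal.toReal_nonneg
  have hχcont : Continuous (fun y => χ (dist y p)) :=
    hχc.comp_continuous (continuous_id.dist continuous_const) (fun y => dist_nonneg)
  have hGcont : ∀ lam : ℝ, Continuous (fun y => Gb lam (χ (dist y p))) :=
    fun lam => (continuous_Gb lam).comp hχcont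
  have hint : ∀ lam : ℝ, Integrable (fun y => Gb lam (χ (dist y p))) μ :=
    fun lam => cont_integrable μ (hGcont lam)
  have hintf : ∀ lam : ℝ, Integrable (fun y => f y * Gb lam (χ (dist y p))) μ :=
    fun lam => cont_integrable μ (hf.mul (hGcont lam))
  obtain ⟨M, hM⟩ : ∃ M, ∀ y, |f y| ≤ M := by
    obtain ⟨C, hC⟩ := isCompact_univ.exists_bound_of_continuousOn hf.continuousOn
    exact ⟨C, fun y => by simpa using hC y (Set.mem_univ y)⟩
  have hM0 : 0 ≤ M := le_trans (abs_nonneg _) (hM p)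
  rw [Metric.tendsto_nhds]
  intro ε hε
  set ε₁ : ℝ := ε/(4*(|L|+1)) with hε₁def
  have hε₁0 : 0 < ε₁ := by positivity
  have huc := CompactSpace.uniformContinuous_of_continuous hf
  rw [Metric.uniformContinuous_iff] at huc
  obtain ⟨r₁, hr₁0, hfr⟩ := huc ε₁ hε₁0
  set r₂ : ℝ := min r₁ δ with hr₂def
  have hr₂0 : 0 < r₂ := lt_min hr₁0 hδ
  have hr₂δ : r₂ ≤ δ := min_le_right _ _
  have hr₂r₁ : r₂ ≤ r₁ := min_le_left _ _
  have key : ∀ lam : ℝ, 0 < lam →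
      |(∫ y, f y * Gb lam (χ (dist y p)) ∂μ) -
          f p * (∫ y, Gb lam (χ (dist y p)) ∂μ)| ≤
        ε₁ * (∫ y, Gb lam (χ (dist y p)) ∂μ) + 2*M*(MX * Gb lam r₂) := by
    intro lam hlam
    have habs_int : Integrable (fun y => |f y - f p| * Gb lam (χ (dist y p))) μ :=
      cont_integrable μ (((hf.sub continuous_const).abs).mul (hGcont lam))
    have h0 : (∫ y, f y * Gb lam (χ (dist y p)) ∂μ) -
        f p * (∫ y, Gb lam (χ (dist y p)) ∂μ) =
        ∫ y, (f y - f p) * Gb lam (χ (dist y p)) ∂μ := by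
      rw [← integral_const_mul, ← integral_sub (hintf lam)
        (cont_integrable μ (f := fun y => f p * Gb lam (χ (dist y p))) (continuous_const.mul (hGcont lam)))]
      exact integral_congr_ae (ae_of_all _ fun y => by ring)
    rw [h0]
    have h1 : |∫ y, (f y - f p) * Gb lam (χ (dist y p)) ∂μ| ≤
        ∫ y, |f y - f p| * Gb lam (χ (dist y p)) ∂μ := by
      calc |∫ y, (f y - f p) * Gb lam (χ (dist y p)) ∂μ|
          = ‖∫ y, (f y - f p) * Gb lam (χ (dist y p)) ∂μ‖ := (Real.norm_eq_abs _).symm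
        _ ≤ ∫ y, ‖(f y - f p) * Gb lam (χ (dist y p))‖ ∂μ := norm_integral_le_integral_norm _
        _ = ∫ y, |f y - f p| * Gb lam (χ (dist y p)) ∂μ :=
            integral_congr_ae (ae_of_all _ fun y => by
              show ‖(f y - f p) * Gb lam (χ (dist y p))‖ = |f y - f p| * Gb lam (χ (dist y p))
              rw [Real.norm_eq_abs, abs_mul, abs_of_nonneg (Gb_nonneg _ _)])
    refine h1.trans ?_
    rw [← integral_add_compl (measurableSet_ball (x := p) (ε := r₂)) habs_int]
    have h2 : (∫ y in Metric.ball p r₂, |f y - f p| * Gb lam (χ (dist y p)) ∂μ) ≤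
        ε₁ * ∫ y, Gb lam (χ (dist y p)) ∂μ := by
      calc (∫ y in Metric.ball p r₂, |f y - f p| * Gb lam (χ (dist y p)) ∂μ)
          ≤ ∫ y in Metric.ball p r₂, ε₁ * Gb lam (χ (dist y p)) ∂μ := by
            apply setIntegral_mono_on habs_int.integrableOn
              (cont_integrable μ (continuous_const.mul (hGcont lam))).integrableOn
              measurableSet_ball
            intro y hy
            apply mul_le_mul_of_nonneg_right _ (Gb_nonneg _ _)
            have := hfr (a := y) (b := p) (lt_of_lt_of_le (Metric.mem_ball.mp hy) hr₂r₁)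
            rw [Real.dist_eq] at this
            exact this.le
        _ ≤ ∫ y, ε₁ * Gb lam (χ (dist y p)) ∂μ :=
            setIntegral_le_integral (cont_integrable μ (continuous_const.mul (hGcont lam)))
              (ae_of_all _ fun y => mul_nonneg hε₁0.le (Gb_nonneg _ _))
        _ = ε₁ * ∫ y, Gb lam (χ (dist y p)) ∂μ := integral_const_mul _ _
    have h3 : (∫ y in (Metric.ball p r₂)ᶜ, |f y - f p| * Gb lam (χ (dist y p)) ∂μ) ≤
        2*M*(MX * Gb lam r₂) := by
      calc (∫ y in (Metric.ball p r₂)ᶜ, |f y - f p| * Gb lam (χ (dist y p)) ∂μ)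
          ≤ ∫ _y in (Metric.ball p r₂)ᶜ, 2*M*Gb lam r₂ ∂μ := by
            apply setIntegral_mono_on habs_int.integrableOn
              ((integrableOn_const_iff).mpr (Or.inr (measure_lt_top μ _))) measurableSet_ball.compl
            intro y hy
            have hyd : r₂ ≤ dist y p := by
              simpa [Metric.mem_ball, not_lt] using hy
            have hcd : r₂ ≤ χ (dist y p) := by
              calc r₂ = χ r₂ := (hχ1 r₂ ⟨hr₂0.le, hr₂δ⟩).symm
                _ ≤ χ (dist y p) := hχmono (Set.mem_Ici.mpr hr₂0.le)
                    (Set.mem_Ici.mpr dist_nonneg) hyd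
            have hfb : |f y - f p| ≤ 2*M := by
              calc |f y - f p| ≤ |f y| + |f p| := abs_sub _ _
                _ ≤ 2*M := by linarith [hM y, hM p]
            exact mul_le_mul hfb (Gb_anti hlam hr₂0.le hcd) (Gb_nonneg _ _) (by linarith)
        _ = (μ ((Metric.ball p r₂)ᶜ)).toReal • (2*M*Gb lam r₂) := setIntegral_const _
        _ ≤ 2*M*(MX * Gb lam r₂) := by
            rw [smul_eq_mul]
            calc (μ ((Metric.ball p r₂)ᶜ)).toReal * (2*M*Gb lam r₂)
                ≤ MX * (2*M*Gb lam r₂) := mul_le_mul_of_nonneg_right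
                  (ENNReal.toReal_mono (measure_ne_top μ _) (measure_mono (Set.subset_univ _)))
                  (mul_nonneg (by linarith) (Gb_nonneg _ _))
              _ = 2*M*(MX * Gb lam r₂) := by ring
    linarith
  have hE1 : ∀ᶠ lam in atTop, 2*M*(MX * Gb lam r₂) < ε/4 := by
    have h := tendsto_const_Gb (C := 2*M*MX) (by positivity) hr₂0
    have h2 := h.eventually_lt_const (show (0:ℝ) < ε/4 by positivity)
    filter_upwards [h2] with lam hl
    calc 2*M*(MX*Gb lam r₂) = 2*M*MX*Gb lam r₂ := by ring
      _ < ε/4 := hl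
  have hE2 : ∀ᶠ lam in atTop,
      |(∫ y, Gb lam (χ (dist y p)) ∂μ) - L| < min 1 (ε/(4*(M+1))) := by
    have := Metric.tendsto_nhds.mp hg (min 1 (ε/(4*(M+1)))) (lt_min one_pos (by positivity))
    simpa [Real.dist_eq] using this
  filter_upwards [eventually_gt_atTop 0, hE1, hE2] with lam hlam hb1 hb2
  rw [Real.dist_eq]
  have hk := key lam hlam
  have habs2 := abs_lt.mp hb2
  have hgle : (∫ y, Gb lam (χ (dist y p)) ∂μ) ≤ |L| + 1 := by
    have h5 : (∫ y, Gb lam (χ (dist y p)) ∂μ) - L < min 1 (ε/(4*(M+1))) := habs2.2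
    have h6 : min 1 (ε/(4*(M+1))) ≤ 1 := min_le_left _ _
    have := le_abs_self L
    linarith
  have hgnn : 0 ≤ (∫ y, Gb lam (χ (dist y p)) ∂μ) :=
    integral_nonneg (fun y => Gb_nonneg _ _)
  have he1 : ε₁ * (∫ y, Gb lam (χ (dist y p)) ∂μ) ≤ ε/4 := by
    calc ε₁ * (∫ y, Gb lam (χ (dist y p)) ∂μ) ≤ ε₁ * (|L|+1) :=
        mul_le_mul_of_nonneg_left hgle hε₁0.le
      _ = ε/4 := by
        rw [hε₁def]
        have hL1 : |L|+1 ≠ 0 := by positivity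
        field_simp
  have he2 : |f p| * |(∫ y, Gb lam (χ (dist y p)) ∂μ) - L| ≤ ε/4 := by
    have h7 : |(∫ y, Gb lam (χ (dist y p)) ∂μ) - L| ≤ ε/(4*(M+1)) :=
      le_trans hb2.le (min_le_right _ _)
    calc |f p| * |(∫ y, Gb lam (χ (dist y p)) ∂μ) - L| ≤ M * (ε/(4*(M+1))) :=
        mul_le_mul (hM p) h7 (abs_nonneg _) hM0
      _ ≤ ε/4 := by
        rw [mul_comm, div_mul_eq_mul_div, div_le_div_iff₀ (by positivity) (by norm_num)]
        nlinarith
  calc |(∫ y, f y * Gb lam (χ (dist y p)) ∂μ) - f p * L|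
      ≤ |(∫ y, f y * Gb lam (χ (dist y p)) ∂μ) -
          f p * (∫ y, Gb lam (χ (dist y p)) ∂μ)| +
        |f p * (∫ y, Gb lam (χ (dist y p)) ∂μ) - f p * L| := abs_sub_le _ _ _
    _ ≤ (ε₁ * (∫ y, Gb lam (χ (dist y p)) ∂μ) + 2*M*(MX * Gb lam r₂)) +
        |f p| * |(∫ y, Gb lam (χ (dist y p)) ∂μ) - L| := by
        have : |f p * (∫ y, Gb lam (χ (dist y p)) ∂μ) - f p * L| =
            |f p| * |(∫ y, Gb lam (χ (dist y p)) ∂μ) - L| := by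
          rw [← abs_mul]; ring_nf
        rw [this]
        linarith
    _ < ε := by linarith

set_option maxHeartbeats 1000000 in
/-- On a compact metric space `X` with a finite Borel measure `μ` that is
4-dimensional-volume-like near points `x 1, …, x k` (i.e. `μ(B(x i, r))/r⁴ → c > 0` as
`r → 0⁺`), with weights `t i ∈ [0,1]` summing to `1`, `δ > 0`, a smooth non-decreasing
cutoff `χ` with `χ s = s` on `[0,δ]`, `χ s = 2δ` for `s ≥ 2δ`, `χ s ∈ [δ,2δ]` on
`[δ,2δ]`, and the test functions
`φ λ y = (1/4) log ∑ i, t i * (2λ/(1 + λ² χ(d(y, x i))²))⁴`,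
the quantities `∫ e^{4 φ λ} dμ` are positive and finite for large `λ`, and the
probability measures with density `e^{4 φ λ}/∫ e^{4 φ λ} dμ` w.r.t. `μ` converge weakly
to `σ = ∑ i, t i δ_{x i}` as `λ → +∞`: for every continuous `f : X → ℝ`, the ratio
`(∫ f e^{4 φ λ} dμ)/(∫ e^{4 φ λ} dμ)` tends to `∑ i, t i * f (x i)`. -/
theorem standard_bubbles_converge_to_barycenter
    {X : Type*} [MetricSpace X] [CompactSpace X]
    [MeasurableSpace X] [BorelSpace X]
    (μ : Measure X) [IsFiniteMeasure μ]
    (k : ℕ) (hk : 1 ≤ k) (x : Fin k → X) (t : Fin k → ℝ)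
    (ht0 : ∀ i, t i ∈ Set.Icc (0 : ℝ) 1) (ht1 : ∑ i, t i = 1)
    (c : ℝ) (hc : 0 < c)
    (hμball : ∀ i, Tendsto (fun r : ℝ => (μ (Metric.ball (x i) r)).toReal / r ^ 4)
      (nhdsWithin 0 (Set.Ioi 0)) (nhds c))
    (δ : ℝ) (hδ : 0 < δ)
    (χ : ℝ → ℝ) (hχsmooth : ContDiffOn ℝ (⊤ : ℕ∞) χ (Set.Ici 0))
    (hχmono : MonotoneOn χ (Set.Ici 0))
    (hχ1 : ∀ s ∈ Set.Icc (0 : ℝ) δ, χ s = s)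
    (hχ2 : ∀ s : ℝ, 2 * δ ≤ s → χ s = 2 * δ)
    (hχ3 : ∀ s ∈ Set.Icc δ (2 * δ), χ s ∈ Set.Icc δ (2 * δ))
    (φ : ℝ → X → ℝ)
    (hφ : ∀ lam : ℝ, 0 < lam → ∀ y : X, φ lam y =
      (1 / 4) * Real.log
        (∑ i, t i * (2 * lam / (1 + lam ^ 2 * (χ (dist y (x i))) ^ 2)) ^ 4)) :
    (∀ᶠ lam in atTop, Integrable (fun y => Real.exp (4 * φ lam y)) μ ∧
      0 < ∫ y, Real.exp (4 * φ lam y) ∂μ) ∧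
    (∀ f : X → ℝ, Continuous f →
      Tendsto (fun lam => (∫ y, f y * Real.exp (4 * φ lam y) ∂μ) /
          ∫ y, Real.exp (4 * φ lam y) ∂μ)
        atTop (nhds (∑ i, t i * f (x i)))) := by
  have hχc : ContinuousOn χ (Set.Ici 0) := hχsmooth.continuousOn
  set L : ℝ := 16*c/3 with hLdef
  have hL0 : 0 < L := by rw [hLdef]; linarith
  have hg : ∀ i, Tendsto (fun lam => ∫ y, Gb lam (χ (dist y (x i))) ∂μ) atTop (nhds L) :=
    fun i => concA μ (x i) c hc (hμball i) δ hδ χ hχc hχmono hχ1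
  have hχconti : ∀ i, Continuous (fun y => χ (dist y (x i))) :=
    fun i => hχc.comp_continuous (continuous_id.dist continuous_const) (fun y => dist_nonneg)
  have hGconti : ∀ (lam : ℝ) i, Continuous (fun y => Gb lam (χ (dist y (x i)))) :=
    fun lam i => (continuous_Gb lam).comp (hχconti i)
  have hintG : ∀ (lam : ℝ) i, Integrable (fun y => Gb lam (χ (dist y (x i)))) μ :=
    fun lam i => cont_integrable μ (hGconti lam i)
  -- pointwise identity
  have hexp : ∀ lam : ℝ, 0 < lam → ∀ y,
      Real.exp (4 * φ lam y) = ∑ i, t i * Gb lam (χ (dist y (x i))) := by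
    intro lam hlam y
    rw [hφ lam hlam y]
    have hpos : 0 < ∑ i, t i * (2 * lam / (1 + lam ^ 2 * (χ (dist y (x i))) ^ 2)) ^ 4 := by
      obtain ⟨j, hj⟩ : ∃ j, 0 < t j := by
        by_contra h
        push_neg at h
        have h2 : ∑ i, t i ≤ 0 := Finset.sum_nonpos (fun i _ => h i)
        rw [ht1] at h2
        linarith
      apply Finset.sum_pos' (fun i _ => mul_nonneg (ht0 i).1 (by positivity))
      refine ⟨j, Finset.mem_univ j, mul_pos hj ?_⟩
      exact pow_pos (div_pos (by linarith) (den_pos lam _)) 4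
    have h44 : (4:ℝ) * ((1/4) * Real.log
        (∑ i, t i * (2 * lam / (1 + lam ^ 2 * (χ (dist y (x i))) ^ 2)) ^ 4)) = Real.log
        (∑ i, t i * (2 * lam / (1 + lam ^ 2 * (χ (dist y (x i))) ^ 2)) ^ 4) := by ring
    rw [h44, Real.exp_log hpos]
    rfl
  -- integral identities
  have hD : ∀ lam : ℝ, 0 < lam → (∫ y, Real.exp (4 * φ lam y) ∂μ) =
      ∑ i, t i * ∫ y, Gb lam (χ (dist y (x i))) ∂μ := by
    intro lam hlam
    rw [integral_congr_ae (ae_of_all _ (hexp lam hlam)),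
      integral_finset_sum _ (fun i _ => ((hintG lam i).const_mul (t i)))]
    exact Finset.sum_congr rfl fun i _ => integral_const_mul _ _
  have hDt : Tendsto (fun lam => ∫ y, Real.exp (4 * φ lam y) ∂μ) atTop (nhds L) := by
    have h := tendsto_finset_sum Finset.univ (fun (i : Fin k) (_ : i ∈ Finset.univ) =>
      ((hg i).const_mul (t i)))
    have h2 : ∑ i, t i * L = L := by rw [← Finset.sum_mul, ht1, one_mul]
    rw [h2] at h
    exact Tendsto.congr' (by filter_upwards [eventually_gt_atTop 0] with lam hl
      using (hD lam hl).symm) h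
  constructor
  · filter_upwards [eventually_gt_atTop 0, hDt.eventually_const_lt (half_lt_self hL0)]
      with lam hlam hpos
    refine ⟨?_, lt_trans (by linarith) hpos⟩
    exact (integrable_finset_sum _ (fun i _ => ((hintG lam i).const_mul (t i)))).congr
      (ae_of_all _ fun y => (hexp lam hlam y).symm)
  · intro f hf
    have hfN : Tendsto (fun lam => ∑ i, t i * ∫ y, f y * Gb lam (χ (dist y (x i))) ∂μ)
        atTop (nhds (∑ i, t i * (f (x i) * L))) :=
      tendsto_finset_sum Finset.univ (fun (i : Fin k) (_ : i ∈ Finset.univ) =>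
        ((concB μ (x i) L hf δ hδ χ hχc hχmono hχ1 (hg i)).const_mul (t i)))
    have hNid : ∀ lam : ℝ, 0 < lam → (∫ y, f y * Real.exp (4 * φ lam y) ∂μ) =
        ∑ i, t i * ∫ y, f y * Gb lam (χ (dist y (x i))) ∂μ := by
      intro lam hlam
      have h3 : (fun y => f y * Real.exp (4 * φ lam y)) =
          fun y => ∑ i, t i * (f y * Gb lam (χ (dist y (x i)))) := by
        funext y
        rw [hexp lam hlam y, Finset.mul_sum]
        exact Finset.sum_congr rfl fun i _ => by ring
      rw [h3, integral_finset_sum _ (fun i _ =>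
        ((cont_integrable μ (f := fun y => f y * Gb lam (χ (dist y (x i)))) (hf.mul (hGconti lam i))).const_mul (t i)))]
      exact Finset.sum_congr rfl fun i _ => integral_const_mul _ _
    have hfN' : Tendsto (fun lam => ∫ y, f y * Real.exp (4 * φ lam y) ∂μ)
        atTop (nhds (∑ i, t i * (f (x i) * L))) :=
      Tendsto.congr' (by filter_upwards [eventually_gt_atTop 0] with lam hl
        using (hNid lam hl).symm) hfN
    have hdiv := hfN'.div hDt hL0.ne'
    have h4 : (∑ i, t i * (f (x i) * L)) / L = ∑ i, t i * f (x i) := by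
      have h5 : ∑ i, t i * (f (x i) * L) = (∑ i, t i * f (x i)) * L := by
        rw [Finset.sum_mul]
        exact Finset.sum_congr rfl fun i _ => by ring
      rw [h5, mul_div_cancel_right₀ _ hL0.ne']
    rwa [h4] at hdiv
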